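/- arXiv:2502.05620 — 5 statements merged into one kernel-verified Lean document; each statement's English description precedes it below -/
import Mathlib

section
/- Let λ ∈ ℂ with Re λ < 0, L ∈ ℂ^{1×n_l}, c ∈ ℂ, and let τ ≥ 0 be real. Then the two 1×1 matrices C_c Σ∞ (exp(A_c τ))ᴴ C_cᴴ and C_c exp(A_c τ) Σ∞ C_cᴴ are equal, and both equal the scalar -e^{λ̄τ}·( c L Lᴴ c̄/(λ+λ̄) + c̄ L̄ Lᴴ c̄/(2λ̄) ) - e^{λτ}·( c L Lᵀ c/(2λ) + c̄ L̄ Lᵀ c/(λ+λ̄) ). Consequently the stationary output kernel S(t,t') of the two-dimensional complex-diagonal system, given by C_c Σ∞ (exp(A_c(t'-t)))ᴴ C_cᴴ for t < t' and by C_c exp(A_c(t-t')) Σ∞ C_cᴴ for t ≥ t', equals this expression with τ = |t'-t|. -/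
open Matrix

/-- **Closed form of the stationary output kernel of the two-dimensional complex-diagonal
system.** For `λ ∈ ℂ` with `Re λ < 0`, `L ∈ ℂ^{1×n_l}`, `c ∈ ℂ` and real `τ ≥ 0`, the
1×1 matrices `C_c Σ∞ (exp(A_c τ))ᴴ C_cᴴ` and `C_c exp(A_c τ) Σ∞ C_cᴴ` are equal and both
equal the scalar
`-e^{λ̄τ}(c L Lᴴ c̄/(λ+λ̄) + c̄ L̄ Lᴴ c̄/(2λ̄)) - e^{λτ}(c L Lᵀ c/(2λ) + c̄ L̄ Lᵀ c/(λ+λ̄))`;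
consequently the stationary kernel `S(t,t')` equals this expression with `τ = |t'-t|`. -/
theorem kernel_complex_diagonal (nl : ℕ) (hnl : 1 ≤ nl)
    (lam : ℂ) (hlam : lam.re < 0) (L : Matrix (Fin 1) (Fin nl) ℂ) (c : ℂ) :
    let Ac : Matrix (Fin 2) (Fin 2) ℂ := Matrix.diagonal ![lam, star lam]
    let Lbar : Matrix (Fin 1) (Fin nl) ℂ := L.map star
    let Sinf : Matrix (Fin 2) (Fin 2) ℂ :=
      -!![(L * Lᴴ) 0 0 / (lam + star lam), (L * Lᵀ) 0 0 / (2 * lam);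
          (Lbar * Lᴴ) 0 0 / (2 * star lam), (Lbar * Lᵀ) 0 0 / (lam + star lam)]
    let Cc : Matrix (Fin 1) (Fin 2) ℂ := !![c, star c]
    let scalar : ℝ → ℂ := fun τ =>
      -Complex.exp (star lam * τ) *
        (c * (L * Lᴴ) 0 0 * star c / (lam + star lam)
          + star c * (Lbar * Lᴴ) 0 0 * star c / (2 * star lam))
      - Complex.exp (lam * τ) *
        (c * (L * Lᵀ) 0 0 * c / (2 * lam)
          + star c * (Lbar * Lᵀ) 0 0 * c / (lam + star lam))
    (∀ τ : ℝ, 0 ≤ τ →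
      Cc * Sinf * (NormedSpace.exp ((τ : ℂ) • Ac))ᴴ * Ccᴴ
        = Cc * NormedSpace.exp ((τ : ℂ) • Ac) * Sinf * Ccᴴ ∧
      (Cc * Sinf * (NormedSpace.exp ((τ : ℂ) • Ac))ᴴ * Ccᴴ) 0 0 = scalar τ ∧
      (Cc * NormedSpace.exp ((τ : ℂ) • Ac) * Sinf * Ccᴴ) 0 0 = scalar τ) ∧
    (∀ t t' : ℝ,
      (if t < t' then
          (Cc * Sinf * (NormedSpace.exp (((t' - t : ℝ) : ℂ) • Ac))ᴴ * Ccᴴ) 0 0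
        else
          (Cc * NormedSpace.exp (((t - t' : ℝ) : ℂ) • Ac) * Sinf * Ccᴴ) 0 0)
        = scalar |t' - t|) := by
  intro Ac Lbar Sinf Cc scalar
  have hexp : ∀ τ : ℝ, NormedSpace.exp ((τ : ℂ) • Ac) =
      Matrix.diagonal ![Complex.exp (lam * τ), Complex.exp (star lam * τ)] := by
    intro τ
    have h1 : (τ : ℂ) • Ac = Matrix.diagonal ![lam * τ, star lam * τ] := by
      show (τ : ℂ) • Matrix.diagonal ![lam, star lam] = _
      rw [← Matrix.diagonal_smul]
      congr 1
      funext i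
      fin_cases i <;> simp [mul_comm]
    rw [h1, Matrix.exp_diagonal, Pi.exp_def]
    refine congrArg Matrix.diagonal (funext fun i => ?_)
    fin_cases i <;> simp [Complex.exp_eq_exp_ℂ]
  have key : ∀ τ : ℝ,
      (Cc * Sinf * (NormedSpace.exp ((τ : ℂ) • Ac))ᴴ * Ccᴴ) 0 0 = scalar τ ∧
      (Cc * NormedSpace.exp ((τ : ℂ) • Ac) * Sinf * Ccᴴ) 0 0 = scalar τ := by
    intro τ
    have hc : (starRingEnd ℂ) (Complex.exp (lam * τ)) = Complex.exp ((starRingEnd ℂ) lam * τ) := by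
      rw [← Complex.exp_conj, _root_.map_mul, Complex.conj_ofReal]
    have hc' : (starRingEnd ℂ) (Complex.exp ((starRingEnd ℂ) lam * τ)) = Complex.exp (lam * τ) := by
      rw [← Complex.exp_conj, _root_.map_mul, Complex.conj_ofReal]
      simp
    have hab : ∑ x, Lbar 0 x * L 0 x = ∑ x, L 0 x * (starRingEnd ℂ) (L 0 x) := by
      refine Finset.sum_congr rfl fun x _ => ?_
      simp [Lbar, Matrix.map_apply, mul_comm]
    constructor <;>
    · simp only [hexp, Matrix.mul_apply, Fin.sum_univ_two, Matrix.conjTranspose_apply,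
        Matrix.diagonal_apply, Sinf, Cc, scalar, Matrix.neg_apply, Matrix.cons_val',
        Matrix.cons_val_zero, Matrix.cons_val_one, Matrix.head_cons, Matrix.head_fin_const,
        Matrix.empty_val', Matrix.cons_val_fin_one, Matrix.of_apply]
      simp only [Matrix.diagonal_apply, Complex.star_def, Fin.isValue]
      norm_num [hc, hc', hab, mul_comm ((τ:ℂ))]
      ring
  have heq : ∀ τ : ℝ,
      Cc * Sinf * (NormedSpace.exp ((τ : ℂ) • Ac))ᴴ * Ccᴴ
        = Cc * NormedSpace.exp ((τ : ℂ) • Ac) * Sinf * Ccᴴ := by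
    intro τ
    ext i j
    fin_cases i; fin_cases j
    exact (key τ).1.trans (key τ).2.symm
  refine ⟨fun τ _ => ⟨heq τ, (key τ).1, (key τ).2⟩, fun t t' => ?_⟩
  split_ifs with h
  · rw [abs_of_pos (by linarith)]
    exact (key (t' - t)).1
  · rw [abs_of_nonpos (by linarith), neg_sub]
    exact (key (t - t')).2
end

section
/- Let r ≥ 1 and, for j = 1,…,r, let λ_j ∈ ℂ with λ_j ≠ 0, c_j ∈ ℂ, B_j ∈ ℂ^{1×n_u} row vectors, m̃_j ∈ ℂ; let δ > 0 and u : ℕ → ℝ^{n_u}. Define the 2r×2r block-diagonal matrix A_c with j-th diagonal block diag(λ_j, λ̄_j), the stacked matrix B_c ∈ ℂ^{2r×n_u} whose rows are B_1, B̄_1, …, B_r, B̄_r, the row vector C_c = [c_1, c̄_1, …, c_r, c̄_r] ∈ ℂ^{1×2r}, and m₀ ∈ ℂ^{2r} with entries m̃_1, m̃_1conjugate, …, m̃_r, m̃_rconjugate. With Ā = exp(A_c δ) and B̄_d = (Ā - I) A_c⁻¹ B_c, for every k ∈ ℕ: C_c ( Ā^k m₀ + Σ_{i=1}^{k} Ā^{i-1}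 B̄_d u(iδ) ) = Σ_{j=1}^{r} 2 Re( c_j e^{λ_j kδ} m̃_j + Σ_{i=1}^{k} (c_j/λ_j) e^{λ_j (i-1)δ} (e^{λ_j δ} - 1) B_j u(iδ) ). -/
open Matrix

/-- **Discretized mean of an additive composition of `r` two-dimensional complex-diagonal
systems.** With the `2r×2r` block diagonal state matrix `A_c` (blocks `diag(λ_j, λ̄_j)`),
stacked input matrix `B_c`, output row `C_c = [c_1, c̄_1, …, c_r, c̄_r]`, initial mean
`m₀ = (m̃_1, m̃̄_1, …, m̃_r, m̃̄_r)ᵀ`, `Ā = exp(A_c δ)` and `B̄_d = (Ā - I)A_c⁻¹ B_c`, for all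
`k ∈ ℕ` the discretized mean output is the sum over blocks of the one-dimensional means:
`C_c(Ā^k m₀ + Σ_{i=1}^k Ā^{i-1} B̄_d u(iδ))
  = Σ_{j=1}^r 2 Re(c_j e^{λ_j kδ} m̃_j + Σ_{i=1}^k (c_j/λ_j) e^{λ_j(i-1)δ}(e^{λ_j δ}-1) B_j u(iδ))`. -/
theorem discretized_mean_additive_composition (r nu : ℕ) (hr : 1 ≤ r)
    (lam : Fin r → ℂ) (hlam : ∀ j, lam j ≠ 0) (c : Fin r → ℂ)
    (B : Fin r → Matrix (Fin 1) (Fin nu) ℂ) (mt : Fin r → ℂ)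
    (δ : ℝ) (hδ : 0 < δ) (u : ℕ → Fin nu → ℝ) :
    let Ac : Matrix (Fin 2 × Fin r) (Fin 2 × Fin r) ℂ :=
      Matrix.blockDiagonal fun j => Matrix.diagonal ![lam j, star (lam j)]
    let Bc : Matrix (Fin 2 × Fin r) (Fin nu) ℂ :=
      Matrix.of fun p i => if p.1 = 0 then B p.2 0 i else star (B p.2 0 i)
    let Cc : Matrix (Fin 1) (Fin 2 × Fin r) ℂ :=
      Matrix.of fun _ p => if p.1 = 0 then c p.2 else star (c p.2)
    let m0 : Matrix (Fin 2 × Fin r) (Fin 1) ℂ :=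
      Matrix.of fun p _ => if p.1 = 0 then mt p.2 else star (mt p.2)
    let uC : ℕ → Matrix (Fin nu) (Fin 1) ℂ := fun i => Matrix.of fun j _ => ((u i j : ℝ) : ℂ)
    let Abar : Matrix (Fin 2 × Fin r) (Fin 2 × Fin r) ℂ := NormedSpace.exp ((δ : ℂ) • Ac)
    let Bbar : Matrix (Fin 2 × Fin r) (Fin nu) ℂ := (Abar - 1) * Ac⁻¹ * Bc
    ∀ k : ℕ,
      (Cc * (Abar ^ k * m0 + ∑ i ∈ Finset.Icc 1 k, Abar ^ (i - 1) * Bbar * uC i)) 0 0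
        = ∑ j : Fin r,
            ((2 * (c j * Complex.exp (lam j * (k : ℂ) * (δ : ℂ)) * mt j
              + ∑ i ∈ Finset.Icc 1 k,
                  (c j / lam j) * Complex.exp (lam j * ((i : ℂ) - 1) * (δ : ℂ))
                    * (Complex.exp (lam j * (δ : ℂ)) - 1) * (B j * uC i) 0 0).re : ℝ) : ℂ) := by
  intro Ac Bc Cc m0 uC Abar Bbar k
  have hBc : Bc = Matrix.of fun p i => if p.1 = 0 then B p.2 0 i else star (B p.2 0 i) := rfl
  have hCc : Cc = Matrix.of fun _ p => if p.1 = 0 then c p.2 else star (c p.2) := rfl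
  have hm0 : m0 = Matrix.of fun p _ => if p.1 = 0 then mt p.2 else star (mt p.2) := rfl
  have huC : ∀ i, uC i = Matrix.of fun j _ => ((u i j : ℝ) : ℂ) := fun _ => rfl
  set d : Fin 2 × Fin r → ℂ := fun p => if p.1 = 0 then lam p.2 else star (lam p.2) with hdd
  have hAc : Ac = Matrix.diagonal d := by
    show Matrix.blockDiagonal _ = _
    rw [Matrix.blockDiagonal_diagonal]
    have hfun : (fun ik : Fin 2 × Fin r => ![lam ik.2, star (lam ik.2)] ik.1) = d := by
      funext p
      rcases p with ⟨x, j⟩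
      fin_cases x <;> simp [hdd]
    rw [hfun]
  have hdne : ∀ p, d p ≠ 0 := by
    rintro ⟨x, j⟩
    fin_cases x <;> simp [hdd, hlam j]
  set e : Fin 2 × Fin r → ℂ := fun p => Complex.exp ((δ : ℂ) * d p) with hee
  have hAbar : Abar = Matrix.diagonal e := by
    show NormedSpace.exp ((δ : ℂ) • Ac) = _
    rw [hAc, ← Matrix.diagonal_smul, Matrix.exp_diagonal, Pi.exp_def]
    congr 1
    funext p
    simp [hee, ← Complex.exp_eq_exp_ℂ]
  have hInv : Ac⁻¹ = Matrix.diagonal (fun p => (d p)⁻¹) := by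
    rw [hAc]
    apply Matrix.inv_eq_right_inv
    rw [Matrix.diagonal_mul_diagonal]
    have hfun : (fun p => d p * (d p)⁻¹) = fun _ : Fin 2 × Fin r => (1 : ℂ) :=
      funext fun p => mul_inv_cancel₀ (hdne p)
    rw [hfun]
    exact Matrix.diagonal_one
  have hBbar : Bbar = Matrix.diagonal (fun p => (e p - 1) * (d p)⁻¹) * Bc := by
    show (Abar - 1) * Ac⁻¹ * Bc = _
    rw [hAbar, hInv, ← Matrix.diagonal_one, Matrix.diagonal_sub, Matrix.diagonal_mul_diagonal]
  have key : ∀ p, (Abar ^ k * m0 + ∑ i ∈ Finset.Icc 1 k, Abar ^ (i - 1) * Bbar * uC i) p 0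
      = e p ^ k * m0 p 0
        + ∑ i ∈ Finset.Icc 1 k, e p ^ (i - 1) * (e p - 1) * (d p)⁻¹ * (Bc * uC i) p 0 := by
    intro p
    rw [Matrix.add_apply, Matrix.sum_apply]
    congr 1
    · rw [hAbar, Matrix.diagonal_pow, Matrix.diagonal_mul, Pi.pow_apply]
    · refine Finset.sum_congr rfl fun i _ => ?_
      rw [hAbar, hBbar, Matrix.diagonal_pow, ← Matrix.mul_assoc,
        Matrix.diagonal_mul_diagonal, Matrix.mul_assoc, Matrix.diagonal_mul]
      simp only [Pi.mul_apply, Pi.pow_apply]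
      ring
  rw [Matrix.mul_apply]
  simp only [key]
  rw [Fintype.sum_prod_type, Fin.sum_univ_two, ← Finset.sum_add_distrib]
  refine Finset.sum_congr rfl fun j _ => ?_
  set E : ℂ := Complex.exp ((δ : ℂ) * lam j) with hE
  set z : ℂ := c j * Complex.exp (lam j * (k : ℂ) * (δ : ℂ)) * mt j
      + ∑ i ∈ Finset.Icc 1 k,
          (c j / lam j) * Complex.exp (lam j * ((i : ℂ) - 1) * (δ : ℂ))
            * (Complex.exp (lam j * (δ : ℂ)) - 1) * (B j * uC i) 0 0 with hz
  have hBu0 : ∀ i, (Bc * uC i) (0, j) 0 = (B j * uC i) 0 0 := by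
    intro i
    simp [Matrix.mul_apply, hBc]
  have hBu1 : ∀ i, (Bc * uC i) (1, j) 0 = star ((B j * uC i) 0 0) := by
    intro i
    rw [Matrix.mul_apply, Matrix.mul_apply, star_sum]
    refine Finset.sum_congr rfl fun t _ => ?_
    simp [hBc, huC, star_mul', Complex.conj_ofReal]
  have hd0 : d (0, j) = lam j := by simp [hdd]
  have hd1 : d (1, j) = star (lam j) := by simp [hdd]
  have he0 : e (0, j) = E := by simp [hee, hd0, hE]
  have he1 : e (1, j) = star E := by
    simp only [hee, hd1, hE, RCLike.star_def]
    rw [← Complex.exp_conj, _root_.map_mul, Complex.conj_ofReal]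
  have hfirst : Cc 0 (0, j) * (e (0, j) ^ k * m0 (0, j) 0
      + ∑ i ∈ Finset.Icc 1 k, e (0, j) ^ (i - 1) * (e (0, j) - 1) * (d (0, j))⁻¹
          * (Bc * uC i) (0, j) 0) = z := by
    simp only [he0, hd0, hCc, hm0, Matrix.of_apply, if_pos rfl, if_true, hBu0, hz]
    rw [mul_add, Finset.mul_sum]
    congr 1
    · have : Complex.exp (lam j * (k : ℂ) * (δ : ℂ)) = E ^ k := by
        rw [hE, ← Complex.exp_nat_mul]
        ring_nf
      rw [this]; ring
    · refine Finset.sum_congr rfl fun i hi => ?_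
      have hi1 : 1 ≤ i := (Finset.mem_Icc.mp hi).1
      have h1 : Complex.exp (lam j * ((i : ℂ) - 1) * (δ : ℂ)) = E ^ (i - 1) := by
        rw [hE, ← Complex.exp_nat_mul]
        congr 1
        have : ((i : ℂ) - 1) = ((i - 1 : ℕ) : ℂ) := by
          push_cast [hi1]; ring
        rw [this]; ring
      have h2 : Complex.exp (lam j * (δ : ℂ)) = E := by rw [hE]; ring_nf
      rw [h1, h2, div_eq_mul_inv]; ring
  have hsecond : Cc 0 (1, j) * (e (1, j) ^ k * m0 (1, j) 0
      + ∑ i ∈ Finset.Icc 1 k, e (1, j) ^ (i - 1) * (e (1, j) - 1) * (d (1, j))⁻¹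
          * (Bc * uC i) (1, j) 0) = star z := by
    rw [← hfirst]
    simp only [he0, he1, hd0, hd1, hCc, hm0, Matrix.of_apply, hBu0, hBu1, if_true,
      star_mul', star_add, star_pow, star_sum, star_sub, star_inv₀, star_one,
      one_ne_zero, if_false, Fin.one_eq_zero_iff, Nat.succ_ne_self, ite_false]
  rw [hfirst, hsecond, RCLike.star_def, Complex.add_conj]
end

section
/- Let r ≥ 1 and, for j = 1,…,r, let λ_j ∈ ℂ with Re λ_j < 0 and L_j ∈ ℂ^{1×n_l} row vectors. Let A_c ∈ ℂ^{2r×2r} be block diagonal with j-th block diag(λ_j, λ̄_j), let 𝕃 ∈ ℂ^{2r×(r·n_l)} be block diagonal with j-th 2×n_l block having rows L_j and L̄_j, and let Σ∞ ∈ ℂ^{2r×2r} be block diagonal with j-th block Σ_j = -[[L_j L_jᴴ/(λ_j+λ̄_j), L_j L_jᵀ/(2λ_j)], [L̄_j L_jᴴ/(2λ̄_j), L̄_j L_jᵀ/(λ_j+λ̄_j)]]. Then Σ∞ satisfies the Lyapunov equation A_c Σ∞ + Σ∞ A_cᴴ + 𝕃 𝕃ᴴ = 0. -/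
open Matrix

lemma block_lyap_aux (l a b c d : ℂ) (h1 : l + star l ≠ 0) (h2 : l ≠ 0) :
    Matrix.diagonal ![l, star l] *
        (-!![a / (l + star l), b / (2 * l); c / (2 * star l), d / (l + star l)]) +
      (-!![a / (l + star l), b / (2 * l); c / (2 * star l), d / (l + star l)]) *
        (Matrix.diagonal ![l, star l])ᴴ +
      !![a, b; c, d] = 0 := by
  have h3 : star l ≠ 0 := by simpa using h2
  have h3' : (starRingEnd ℂ) l ≠ 0 := h3
  have h1'' : l + (starRingEnd ℂ) l ≠ 0 := h1
  have h1' : (starRingEnd ℂ) l + l ≠ 0 := by rw [add_comm]; exact h1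
  ext i k
  fin_cases i <;> fin_cases k <;>
    simp [Matrix.mul_apply, Fin.sum_univ_two, Matrix.diagonal, Matrix.conjTranspose_apply,
      Matrix.vecMul, dotProduct] <;>
    (try field_simp) <;> ring

/-- **Lyapunov equation for the additive composition of `r` two-dimensional complex-diagonal
systems.** With block diagonal `A_c` (blocks `diag(λ_j, λ̄_j)`), block diagonal diffusion
matrix `𝕃` (blocks with rows `L_j`, `L̄_j`) and block diagonal `Σ∞` with blocks
`Σ_j = -[[L_j L_jᴴ/(λ_j+λ̄_j), L_j L_jᵀ/(2λ_j)], [L̄_j L_jᴴ/(2λ̄_j), L̄_j L_jᵀ/(λ_j+λ̄_j)]]`,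
one has `A_c Σ∞ + Σ∞ A_cᴴ + 𝕃 𝕃ᴴ = 0`. -/
theorem lyapunov_additive_composition (r nl : ℕ) (hr : 1 ≤ r)
    (lam : Fin r → ℂ) (hlam : ∀ j, (lam j).re < 0)
    (L : Fin r → Matrix (Fin 1) (Fin nl) ℂ) :
    let Ac : Matrix (Fin 2 × Fin r) (Fin 2 × Fin r) ℂ :=
      Matrix.blockDiagonal fun j => Matrix.diagonal ![lam j, star (lam j)]
    let LL : Matrix (Fin 2 × Fin r) (Fin nl × Fin r) ℂ :=
      Matrix.blockDiagonal fun j =>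
        Matrix.of ![fun i => L j 0 i, fun i => star (L j 0 i)]
    let Lbar : Fin r → Matrix (Fin 1) (Fin nl) ℂ := fun j => (L j).map star
    let Sinf : Matrix (Fin 2 × Fin r) (Fin 2 × Fin r) ℂ :=
      Matrix.blockDiagonal fun j =>
        -!![(L j * (L j)ᴴ) 0 0 / (lam j + star (lam j)), (L j * (L j)ᵀ) 0 0 / (2 * lam j);
            (Lbar j * (L j)ᴴ) 0 0 / (2 * star (lam j)),
              (Lbar j * (L j)ᵀ) 0 0 / (lam j + star (lam j))]
    Ac * Sinf + Sinf * Acᴴ + LL * LLᴴ = 0 := by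
  intro Ac LL Lbar Sinf
  set D : Fin r → Matrix (Fin 2) (Fin 2) ℂ :=
    fun j => Matrix.diagonal ![lam j, star (lam j)] with hD
  set B : Fin r → Matrix (Fin 2) (Fin nl) ℂ :=
    fun j => Matrix.of ![fun i => L j 0 i, fun i => star (L j 0 i)] with hB
  set S : Fin r → Matrix (Fin 2) (Fin 2) ℂ :=
    fun j =>
      -!![(L j * (L j)ᴴ) 0 0 / (lam j + star (lam j)), (L j * (L j)ᵀ) 0 0 / (2 * lam j);
          (Lbar j * (L j)ᴴ) 0 0 / (2 * star (lam j)),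
            (Lbar j * (L j)ᵀ) 0 0 / (lam j + star (lam j))] with hS
  have key : ∀ j, D j * S j + S j * (D j)ᴴ + B j * (B j)ᴴ = 0 := by
    intro j
    have h1 : lam j + star (lam j) ≠ 0 := by
      intro h
      have hre : (lam j + star (lam j)).re = 2 * (lam j).re := by
        simp [Complex.add_re]; ring
      rw [h] at hre
      simp at hre
      nlinarith [hlam j]
    have h2 : lam j ≠ 0 := by
      intro h; have := hlam j; rw [h] at this; simp at this
    have hBB : B j * (B j)ᴴ =
        !![(L j * (L j)ᴴ) 0 0, (L j * (L j)ᵀ) 0 0;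
           (Lbar j * (L j)ᴴ) 0 0, (Lbar j * (L j)ᵀ) 0 0] := by
      ext i k
      fin_cases i <;> fin_cases k <;>
        simp [Matrix.mul_apply, B, Lbar, Matrix.conjTranspose_apply, Matrix.transpose_apply,
          Matrix.map_apply]
    rw [hBB]
    exact block_lyap_aux (lam j) _ _ _ _ h1 h2
  calc Ac * Sinf + Sinf * Acᴴ + LL * LLᴴ
      = Matrix.blockDiagonal (fun j => D j * S j + S j * (D j)ᴴ + B j * (B j)ᴴ) := by
        show Matrix.blockDiagonal D * Matrix.blockDiagonal S
            + Matrix.blockDiagonal S * (Matrix.blockDiagonal D)ᴴ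
            + Matrix.blockDiagonal B * (Matrix.blockDiagonal B)ᴴ = _
        rw [Matrix.blockDiagonal_conjTranspose, Matrix.blockDiagonal_conjTranspose,
          ← Matrix.blockDiagonal_mul, ← Matrix.blockDiagonal_mul, ← Matrix.blockDiagonal_mul,
          ← Matrix.blockDiagonal_add, ← Matrix.blockDiagonal_add]
        rfl
    _ = 0 := by
        simp only [key]
        exact Matrix.blockDiagonal_zero
end

section
/- Let ℓ > 0, σ > 0, and define A = [[0, 1],[-3/ℓ², -2√3/ℓ]] ∈ ℝ^{2×2}, Σ∞ = σ²·[[√3, 0],[0, √27/ℓ²]], and the row vector C = [1, 0] ∈ ℝ^{1×2}. Then for every real τ ≥ 0, C Σ∞ (exp(A τ))ᵀ Cᵀ = C exp(A τ) Σ∞ Cᵀ = √3 σ² e^{-√3τ/ℓ}(1 + √3τ/ℓ). Consequently the stationary output kernel S(t,t') of this LTI system equals √3 σ² e^{-√3|t-t'|/ℓ}(1 + √3|t-t'|/ℓ), which is proportional to the one-dimensional Matérn 3/2 kernel with lengthscale ℓ. -/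
open Matrix

lemma exp_of_sq_zero {𝔸 : Type*} [Ring 𝔸] [Algebra ℝ 𝔸] [TopologicalSpace 𝔸]
    [IsTopologicalRing 𝔸] [T2Space 𝔸] (x : 𝔸) (h : x ^ 2 = 0) :
    NormedSpace.exp x = 1 + x := by
  rw [NormedSpace.exp_eq_tsum ℝ]
  have hz : ∀ n ∉ ({0, 1} : Finset ℕ), ((n.factorial : ℝ))⁻¹ • x ^ n = 0 := by
    intro n hn
    simp only [Finset.mem_insert, Finset.mem_singleton] at hn
    have h2 : 2 ≤ n := by omega
    have : x ^ n = 0 := by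
      rw [← Nat.sub_add_cancel h2, pow_add, h, mul_zero]
    simp [this]
  simp only []
  rw [tsum_eq_sum hz]
  simp [Finset.sum_pair, Nat.factorial]

lemma exp_smul_one (c : ℝ) :
    NormedSpace.exp (c • (1 : Matrix (Fin 2) (Fin 2) ℝ)) = Real.exp c • 1 := by
  have h1 : c • (1 : Matrix (Fin 2) (Fin 2) ℝ) = Matrix.diagonal (fun _ => c) := by
    ext i j; by_cases hij : i = j <;> simp [Matrix.one_apply, Matrix.diagonal, hij]
  have h2 : Real.exp c • (1 : Matrix (Fin 2) (Fin 2) ℝ)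
      = Matrix.diagonal (fun _ => Real.exp c) := by
    ext i j; by_cases hij : i = j <;> simp [Matrix.one_apply, Matrix.diagonal, hij]
  rw [h1, h2, Matrix.exp_diagonal]
  congr 1
  rw [Pi.exp_def]
  funext i
  rw [← Real.exp_eq_exp_ℝ]

lemma exp_matern (ℓ : ℝ) (hℓ : 0 < ℓ) (τ : ℝ) :
    NormedSpace.exp (τ • (!![0, 1; -3 / ℓ ^ 2, -2 * Real.sqrt 3 / ℓ] : Matrix (Fin 2) (Fin 2) ℝ))
      = Real.exp (-(Real.sqrt 3 * τ) / ℓ) •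
        !![1 + Real.sqrt 3 * τ / ℓ, τ; -(3 / ℓ ^ 2) * τ, 1 - Real.sqrt 3 * τ / ℓ] := by
  set l := Real.sqrt 3 / ℓ with hl
  have h3 : Real.sqrt 3 ^ 2 = 3 := Real.sq_sqrt (by norm_num)
  have hll : l ^ 2 = 3 / ℓ ^ 2 := by rw [hl, div_pow, h3]
  set N : Matrix (Fin 2) (Fin 2) ℝ := !![l, 1; -(3 / ℓ ^ 2), -l] with hN
  have hN2 : (τ • N) ^ 2 = 0 := by
    rw [smul_pow]
    have : N ^ 2 = 0 := by
      rw [pow_two, hN]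
      ext i j
      fin_cases i <;> fin_cases j <;>
        simp [Matrix.mul_apply, Fin.sum_univ_two, ← hll] <;> ring
    rw [this, smul_zero]
  have hA : τ • (!![0, 1; -3 / ℓ ^ 2, -2 * Real.sqrt 3 / ℓ] : Matrix (Fin 2) (Fin 2) ℝ)
      = (-(Real.sqrt 3 * τ) / ℓ) • (1 : Matrix (Fin 2) (Fin 2) ℝ) + τ • N := by
    ext i j
    fin_cases i <;> fin_cases j <;>
      simp [hN, Matrix.one_apply, hl] <;> ring
  have hcomm : Commute ((-(Real.sqrt 3 * τ) / ℓ) • (1 : Matrix (Fin 2) (Fin 2) ℝ)) (τ • N) :=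
    ((Commute.one_left (τ • N)).smul_left _)
  have hsplit : NormedSpace.exp ((-(Real.sqrt 3 * τ) / ℓ) • (1 : Matrix (Fin 2) (Fin 2) ℝ)
        + τ • N)
      = NormedSpace.exp ((-(Real.sqrt 3 * τ) / ℓ) • (1 : Matrix (Fin 2) (Fin 2) ℝ))
        * NormedSpace.exp (τ • N) := Matrix.exp_add_of_commute _ _ hcomm
  rw [hA, hsplit, exp_smul_one, exp_of_sq_zero _ hN2]
  ext i j
  fin_cases i <;> fin_cases j <;>
    simp [Matrix.mul_apply, Fin.sum_univ_two, Matrix.one_apply, hN, hl] <;> ring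

/-- **The stationary output kernel of the Matérn 3/2 state-space model is the Matérn 3/2
kernel.** For `ℓ > 0`, `σ > 0`, with `A = [[0, 1],[-3/ℓ², -2√3/ℓ]]`,
`Σ∞ = σ²·[[√3, 0],[0, √27/ℓ²]]` and `C = [1, 0]`: for every real `τ ≥ 0`,
`C Σ∞ (exp(A τ))ᵀ Cᵀ = C exp(A τ) Σ∞ Cᵀ = √3 σ² e^{-√3τ/ℓ}(1 + √3τ/ℓ)`; consequently the
stationary kernel `S(t,t')` equals `√3 σ² e^{-√3|t-t'|/ℓ}(1 + √3|t-t'|/ℓ)`. -/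
theorem matern32_kernel (ℓ σ : ℝ) (hℓ : 0 < ℓ) (hσ : 0 < σ) :
    let A : Matrix (Fin 2) (Fin 2) ℝ := !![0, 1; -3 / ℓ ^ 2, -2 * Real.sqrt 3 / ℓ]
    let Sinf : Matrix (Fin 2) (Fin 2) ℝ :=
      σ ^ 2 • !![Real.sqrt 3, 0; 0, Real.sqrt 27 / ℓ ^ 2]
    let C : Matrix (Fin 1) (Fin 2) ℝ := !![1, 0]
    (∀ τ : ℝ, 0 ≤ τ →
      (C * Sinf * (NormedSpace.exp (τ • A))ᵀ * Cᵀ) 0 0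
          = Real.sqrt 3 * σ ^ 2 * Real.exp (-(Real.sqrt 3 * τ) / ℓ)
              * (1 + Real.sqrt 3 * τ / ℓ) ∧
      (C * NormedSpace.exp (τ • A) * Sinf * Cᵀ) 0 0
          = Real.sqrt 3 * σ ^ 2 * Real.exp (-(Real.sqrt 3 * τ) / ℓ)
              * (1 + Real.sqrt 3 * τ / ℓ)) ∧
    (∀ t t' : ℝ,
      (if t < t' then (C * Sinf * (NormedSpace.exp ((t' - t) • A))ᵀ * Cᵀ) 0 0
        else (C * NormedSpace.exp ((t - t') • A) * Sinf * Cᵀ) 0 0)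
        = Real.sqrt 3 * σ ^ 2 * Real.exp (-(Real.sqrt 3 * |t - t'|) / ℓ)
            * (1 + Real.sqrt 3 * |t - t'| / ℓ)) := by
  intro A Sinf C
  have key : ∀ τ : ℝ,
      (C * Sinf * (NormedSpace.exp (τ • A))ᵀ * Cᵀ) 0 0
          = Real.sqrt 3 * σ ^ 2 * Real.exp (-(Real.sqrt 3 * τ) / ℓ)
              * (1 + Real.sqrt 3 * τ / ℓ) ∧
      (C * NormedSpace.exp (τ • A) * Sinf * Cᵀ) 0 0
          = Real.sqrt 3 * σ ^ 2 * Real.exp (-(Real.sqrt 3 * τ) / ℓ)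
              * (1 + Real.sqrt 3 * τ / ℓ) := by
    intro τ
    rw [show A = !![0, 1; -3 / ℓ ^ 2, -2 * Real.sqrt 3 / ℓ] from rfl, exp_matern ℓ hℓ τ]
    constructor <;>
      · simp [Sinf, C, Matrix.mul_apply, Fin.sum_univ_two, Matrix.transpose_apply,
          Matrix.vecHead, Matrix.vecTail, Matrix.smul_apply, Matrix.vecMul, dotProduct]
        ring
  refine ⟨fun τ _ => key τ, fun t t' => ?_⟩
  rcases lt_or_ge t t' with h | h
  · rw [if_pos h, abs_of_neg (by linarith : t - t' < 0)]
    have := (key (t' - t)).1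
    rw [this]
    ring_nf
  · rw [if_neg (not_lt.mpr h), abs_of_nonneg (by linarith : 0 ≤ t - t')]
    exact (key (t - t')).2
end

section
/- Let A ∈ ℝ^{n×n} and suppose there exist constants C₀ > 0 and α > 0 such that ‖exp(A t)‖ ≤ C₀ e^{-αt} for all t ≥ 0 (exponential stability). Let L ∈ ℝ^{n×n_l}. Then the integral Σ∞ = ∫₀^{∞} exp(A t) L Lᵀ (exp(A t))ᵀ dt converges (the integrand is integrable on [0,∞)) and Σ∞ satisfies the steady-state Lyapunov equation A Σ∞ + Σ∞ Aᵀ + L Lᵀ = 0. -/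
open Matrix MeasureTheory

attribute [local instance] Matrix.linftyOpNormedAddCommGroup Matrix.linftyOpNormedSpace
  Matrix.linftyOpNormedRing Matrix.linftyOpNormedAlgebra

lemma aux_entry_le {n m : ℕ} (M : Matrix (Fin n) (Fin m) ℝ) (i : Fin n) (j : Fin m) :
    ‖M i j‖₊ ≤ ‖M‖₊ := by
  rw [Matrix.linfty_opNNNorm_def]
  exact le_trans (Finset.single_le_sum (f := fun j => ‖M i j‖₊) (fun _ _ => zero_le)
    (Finset.mem_univ j)) (Finset.le_sup (f := fun i => ∑ j, ‖M i j‖₊) (Finset.mem_univ i))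

lemma aux_transpose_le {n : ℕ} (M : Matrix (Fin n) (Fin n) ℝ) :
    ‖Mᵀ‖ ≤ (n : ℝ) * ‖M‖ := by
  have h : ‖Mᵀ‖₊ ≤ (n : NNReal) * ‖M‖₊ := by
    rw [Matrix.linfty_opNNNorm_def]
    apply Finset.sup_le
    intro i _
    calc ∑ j, ‖Mᵀ i j‖₊ ≤ ∑ _j : Fin n, ‖M‖₊ :=
          Finset.sum_le_sum fun j _ => aux_entry_le M j i
      _ = (n : NNReal) * ‖M‖₊ := by simp [Finset.sum_const, mul_comm]
  exact_mod_cast h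

/-- **Steady-state covariance of an exponentially stable stochastic LTI system.** If
`‖exp(A t)‖ ≤ C₀ e^{-αt}` for all `t ≥ 0` with `C₀ > 0`, `α > 0`, then
`Σ∞ = ∫₀^∞ exp(A t) L Lᵀ (exp(A t))ᵀ dt` converges (the integrand is integrable on `[0,∞)`)
and satisfies the steady-state Lyapunov equation `A Σ∞ + Σ∞ Aᵀ + L Lᵀ = 0`. -/
theorem steady_state_lyapunov (n nl : ℕ)
    (A : Matrix (Fin n) (Fin n) ℝ) (L : Matrix (Fin n) (Fin nl) ℝ)
    (C₀ α : ℝ) (hC₀ : 0 < C₀) (hα : 0 < α)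
    (hstab : ∀ t : ℝ, 0 ≤ t → ‖NormedSpace.exp (t • A)‖ ≤ C₀ * Real.exp (-α * t)) :
    @IntegrableOn ℝ (Matrix (Fin n) (Fin n) ℝ) _ (Matrix.linftyOpNormedAddCommGroup :
        NormedAddCommGroup (Matrix (Fin n) (Fin n) ℝ)).toUniformSpace.toTopologicalSpace _
      (fun t : ℝ =>
        NormedSpace.exp (t • A) * (L * Lᵀ) * (NormedSpace.exp (t • A))ᵀ)
      (Set.Ici 0) volume ∧
    A * (∫ t in Set.Ici (0:ℝ),
          NormedSpace.exp (t • A) * (L * Lᵀ) * (NormedSpace.exp (t • A))ᵀ)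
      + (∫ t in Set.Ici (0:ℝ),
          NormedSpace.exp (t • A) * (L * Lᵀ) * (NormedSpace.exp (t • A))ᵀ) * Aᵀ
      + L * Lᵀ = 0 := by
  letI : TopologicalSpace (Matrix (Fin n) (Fin n) ℝ) := (Matrix.linftyOpNormedAddCommGroup :
    NormedAddCommGroup (Matrix (Fin n) (Fin n) ℝ)).toUniformSpace.toTopologicalSpace
  set B : Matrix (Fin n) (Fin n) ℝ := L * Lᵀ with hB
  set F : ℝ → Matrix (Fin n) (Fin n) ℝ :=
    fun t => NormedSpace.exp (t • A) * B * (NormedSpace.exp (t • A))ᵀ with hF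
  -- transpose of exp
  have hTrans : ∀ t : ℝ, (NormedSpace.exp (t • A))ᵀ = NormedSpace.exp (t • Aᵀ) := by
    intro t
    erw [← Matrix.exp_transpose, Matrix.transpose_smul]; rfl
  -- continuity
  have hexpCont : Continuous fun t : ℝ => NormedSpace.exp (t • A) :=
    NormedSpace.exp_continuous.comp (continuous_id.smul continuous_const)
  have hexpContT : Continuous fun t : ℝ => NormedSpace.exp (t • Aᵀ) :=
    NormedSpace.exp_continuous.comp (continuous_id.smul continuous_const)
  have hFcont : Continuous F := by
    simp only [hF]
    exact (hexpCont.mul continuous_const).mul (hexpCont.matrix_transpose)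
  -- norm bound on F
  have hFbound : ∀ t : ℝ, 0 ≤ t →
      ‖F t‖ ≤ (C₀ * ‖B‖ * (n * C₀)) * Real.exp (-(2 * α) * t) := by
    intro t ht
    have h1 : ‖NormedSpace.exp (t • A)‖ ≤ C₀ * Real.exp (-α * t) := hstab t ht
    have h2 : ‖(NormedSpace.exp (t • A))ᵀ‖ ≤ (n : ℝ) * (C₀ * Real.exp (-α * t)) :=
      le_trans (aux_transpose_le _) (by
        apply mul_le_mul_of_nonneg_left h1 (Nat.cast_nonneg n))
    calc ‖F t‖ ≤ ‖NormedSpace.exp (t • A) * B‖ * ‖(NormedSpace.exp (t • A))ᵀ‖ :=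
          norm_mul_le _ _
      _ ≤ (‖NormedSpace.exp (t • A)‖ * ‖B‖) * ‖(NormedSpace.exp (t • A))ᵀ‖ := by
          apply mul_le_mul_of_nonneg_right (norm_mul_le _ _) (norm_nonneg _)
      _ ≤ (C₀ * Real.exp (-α * t) * ‖B‖) * ((n : ℝ) * (C₀ * Real.exp (-α * t))) := by
          exact mul_le_mul (mul_le_mul_of_nonneg_right h1 (norm_nonneg _)) h2
            (norm_nonneg _) (by positivity)
      _ = (C₀ * ‖B‖ * (n * C₀)) * Real.exp (-(2 * α) * t) := by
          rw [show -(2*α)*t = (-α*t) + (-α*t) by ring, Real.exp_add]; ring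
  -- integrability of F
  have hExpInt : IntegrableOn (fun t : ℝ => (C₀ * ‖B‖ * (n * C₀)) * Real.exp (-(2 * α) * t))
      (Set.Ici (0:ℝ)) := by
    have := exp_neg_integrableOn_Ioi (0:ℝ) (by linarith : (0:ℝ) < 2 * α)
    exact ((integrableOn_Ici_iff_integrableOn_Ioi).mpr this).const_mul _
  have hFint : IntegrableOn F (Set.Ici (0:ℝ)) := by
    apply Integrable.mono' hExpInt (hFcont.aestronglyMeasurable.restrict)
    filter_upwards [ae_restrict_mem measurableSet_Ici] with t ht
    exact hFbound t ht
  refine ⟨hFint, ?_⟩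
  -- derivative identity
  have hG : ∀ t : ℝ, HasDerivAt F (A * F t + F t * Aᵀ) t := by
    intro t
    have hF' : F = fun t => (NormedSpace.exp (t • A) * B) * NormedSpace.exp (t • Aᵀ) := by
      funext s; rw [hF]; simp [hTrans s]
    rw [hF']
    have d1 : HasDerivAt (fun u : ℝ => NormedSpace.exp (u • A) * B)
        (A * NormedSpace.exp (t • A) * B) t :=
      (hasDerivAt_exp_smul_const' A t).mul_const B
    have d2 : HasDerivAt (fun u : ℝ => NormedSpace.exp (u • Aᵀ))
        (NormedSpace.exp (t • Aᵀ) * Aᵀ) t := hasDerivAt_exp_smul_const Aᵀ t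
    have := d1.mul d2
    refine this.congr_deriv ?_
    simp only [hF, hTrans]
    noncomm_ring
  -- integrability of derivative
  have hDcont : Continuous fun t => A * F t + F t * Aᵀ :=
    ((continuous_const.mul hFcont).add (hFcont.mul continuous_const))
  have hDbound : ∀ t : ℝ, 0 ≤ t → ‖A * F t + F t * Aᵀ‖ ≤
      ((‖A‖ + ‖Aᵀ‖) * (C₀ * ‖B‖ * (n * C₀))) * Real.exp (-(2 * α) * t) := by
    intro t ht
    calc ‖A * F t + F t * Aᵀ‖ ≤ ‖A * F t‖ + ‖F t * Aᵀ‖ := norm_add_le _ _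
      _ ≤ ‖A‖ * ‖F t‖ + ‖F t‖ * ‖Aᵀ‖ := add_le_add (norm_mul_le _ _) (norm_mul_le _ _)
      _ = (‖A‖ + ‖Aᵀ‖) * ‖F t‖ := by ring
      _ ≤ (‖A‖ + ‖Aᵀ‖) * ((C₀ * ‖B‖ * (n * C₀)) * Real.exp (-(2 * α) * t)) := by
          apply mul_le_mul_of_nonneg_left (hFbound t ht) (by positivity)
      _ = ((‖A‖ + ‖Aᵀ‖) * (C₀ * ‖B‖ * (n * C₀))) * Real.exp (-(2 * α) * t) := by ring
  have hDint : IntegrableOn (fun t => A * F t + F t * Aᵀ) (Set.Ici (0:ℝ)) := by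
    apply Integrable.mono' (g := fun t => ((‖A‖ + ‖Aᵀ‖) * (C₀ * ‖B‖ * (n * C₀))) *
        Real.exp (-(2 * α) * t))
      (by
        have := exp_neg_integrableOn_Ioi (0:ℝ) (by linarith : (0:ℝ) < 2 * α)
        exact ((integrableOn_Ici_iff_integrableOn_Ioi).mpr this).const_mul _)
      hDcont.aestronglyMeasurable.restrict
    filter_upwards [ae_restrict_mem measurableSet_Ici] with t ht
    exact hDbound t ht
  -- FTC on [0, T]
  have hFTC : ∀ T : ℝ, 0 ≤ T →
      (∫ t in (0:ℝ)..T, (A * F t + F t * Aᵀ)) = F T - F 0 := by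
    intro T hT
    exact intervalIntegral.integral_eq_sub_of_hasDerivAt (fun t _ => hG t)
      (hDcont.intervalIntegrable 0 T)
  -- F T → 0
  have hFlim : Filter.Tendsto F Filter.atTop (nhds 0) := by
    rw [tendsto_zero_iff_norm_tendsto_zero]
    apply squeeze_zero_norm' (a := fun t => (C₀ * ‖B‖ * (n * C₀)) * Real.exp (-(2 * α) * t))
      (by
        filter_upwards [Filter.eventually_ge_atTop (0:ℝ)] with t ht
        simpa using hFbound t ht)
    · rw [show (0:ℝ) = (C₀ * ‖B‖ * (n * C₀)) * 0 by ring]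
      apply Filter.Tendsto.const_mul
      have h2 : Filter.Tendsto (fun t : ℝ => (2*α)*t) Filter.atTop Filter.atTop :=
        Filter.Tendsto.const_mul_atTop (by linarith) Filter.tendsto_id
      have := Real.tendsto_exp_neg_atTop_nhds_zero.comp h2
      refine this.congr (fun t => ?_)
      simp only [Function.comp_apply, neg_mul]
  -- limit of interval integrals
  have hF0 : F 0 = B := by
    simp [hF, NormedSpace.exp_zero]
  have hIoi : IntegrableOn (fun t => A * F t + F t * Aᵀ) (Set.Ioi (0:ℝ)) :=
    hDint.mono_set Set.Ioi_subset_Ici_self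
  have hlim1 : Filter.Tendsto (fun T : ℝ => ∫ t in (0:ℝ)..T, (A * F t + F t * Aᵀ))
      Filter.atTop (nhds (∫ t in Set.Ioi (0:ℝ), (A * F t + F t * Aᵀ))) :=
    MeasureTheory.intervalIntegral_tendsto_integral_Ioi 0 hIoi Filter.tendsto_id
  have hlim2 : Filter.Tendsto (fun T : ℝ => ∫ t in (0:ℝ)..T, (A * F t + F t * Aᵀ))
      Filter.atTop (nhds (-B)) := by
    have : Filter.Tendsto (fun T : ℝ => F T - F 0) Filter.atTop (nhds (-B)) := by
      have := hFlim.sub_const (F 0)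
      simpa [hF0] using this
    apply this.congr'
    filter_upwards [Filter.eventually_ge_atTop (0:ℝ)] with T hT
    exact (hFTC T hT).symm
  have hIeq : (∫ t in Set.Ioi (0:ℝ), (A * F t + F t * Aᵀ)) = -B :=
    tendsto_nhds_unique hlim1 hlim2
  -- linearity of integral
  have hIci : (∫ t in Set.Ici (0:ℝ), (A * F t + F t * Aᵀ)) = -B := by
    rw [MeasureTheory.integral_Ici_eq_integral_Ioi]; exact hIeq
  have hInt1 : IntegrableOn (fun t => A * F t) (Set.Ici (0:ℝ)) := hFint.const_mul A
  have hInt2 : IntegrableOn (fun t => F t * Aᵀ) (Set.Ici (0:ℝ)) := hFint.mul_const Aᵀ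
  have hsplit : (∫ t in Set.Ici (0:ℝ), (A * F t + F t * Aᵀ))
      = (∫ t in Set.Ici (0:ℝ), A * F t) + (∫ t in Set.Ici (0:ℝ), F t * Aᵀ) :=
    MeasureTheory.integral_add hInt1 hInt2
  have hL : (∫ t in Set.Ici (0:ℝ), A * F t) = A * ∫ t in Set.Ici (0:ℝ), F t := by
    have := (ContinuousLinearMap.mul ℝ (Matrix (Fin n) (Fin n) ℝ) A).integral_comp_comm hFint
    simpa using this
  have hR : (∫ t in Set.Ici (0:ℝ), F t * Aᵀ) = (∫ t in Set.Ici (0:ℝ), F t) * Aᵀ := by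
    have := ((ContinuousLinearMap.mul ℝ (Matrix (Fin n) (Fin n) ℝ)).flip Aᵀ).integral_comp_comm hFint
    simpa using this
  have : A * (∫ t in Set.Ici (0:ℝ), F t) + (∫ t in Set.Ici (0:ℝ), F t) * Aᵀ = -B := by
    rw [← hL, ← hR, ← hsplit, hIci]
  rw [hB] at this
  simp only [hF, hB] at this ⊢
  refine (congrArg (· + L * Lᵀ) this).trans ?_
  abel
end
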